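/- Let T(φ,ρ,A,B) denote the real-linear operator on quadruples (X,Y,p,q), with X, Y Hermitian 3×3 complex matrices and p, q ∈ ℝ, given by the Freudenthal action (X,Y,p,q) ↦ (φX + Xφ† + (ρ/3)X + 2·B*Y + qA, 2·A*X − φ†Y − Yφ − (ρ/3)Y + pB, tr(A∘Y) − ρp, tr(B∘X) + ρq). Then for every Hermitian traceless 3×3 complex matrix Q and every Hermitian 3×3 complex matrix A, the commutator satisfies T(Q,0,0,0)∘T(0,0,A,0) − T(0,0,A,0)∘T(Q,0,0,0) = T(0,0,2(A∘Q),0). In particular, the commutator of a null translation with a boost is again a null translation, with translation parameter proportional to A∘Q. -/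

import Mathlib

/-!
On the quadruples, the boost `T(Q,0,0,0)` acts by `(X, Y, p, q) ↦ (2 Q∘X, -2 Q∘Y, 0, 0)` and the
null translation `T(0,0,A,0)` by `(X, Y, p, q) ↦ (q A, 2 A*X, tr(A∘Y), 0)`. Comparing the
commutator with `T(0,0,2 A∘Q,0)` component by component leaves three identities: commutativity of
`∘`, associativity of the trace form `tr((A∘B)∘C) = tr(A∘(B∘C))`, and the fact that for traceless
`Q` the operator `X ↦ Q∘X` acts on the Freudenthal product as a derivation up to sign,
`(Q∘A)*X + A*(Q∘X) + Q∘(A*X) = 0`. The last is the infinitesimal form of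
`adj(gXg) = g⁻¹ adj(X) g⁻¹` for `det g = 1`, since `X*X = adj X`.
-/

open Matrix BigOperators

/-- 3×3 complex matrices. -/
abbrev Mat3 := Matrix (Fin 3) (Fin 3) ℂ

/-- The Jordan product X∘Y = (XY+YX)/2. -/
noncomputable def jord (X Y : Mat3) : Mat3 := (1/2 : ℂ) • (X * Y + Y * X)

/-- The Freudenthal product. -/
noncomputable def freud (X Y : Mat3) : Mat3 :=
  jord X Y - (1/2 : ℂ) • (X.trace • Y + Y.trace • X)
    + (1/2 : ℂ) • (X.trace * Y.trace - (jord X Y).trace) • (1 : Mat3)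

/-- The Freudenthal action T(φ,ρ,A,B) on quadruples (X,Y,p,q):
(X,Y,p,q) ↦ (φX + Xφ† + (ρ/3)X + 2·B*Y + qA, 2·A*X − φ†Y − Yφ − (ρ/3)Y + pB,
tr(A∘Y) − ρp, tr(B∘X) + ρq). -/
noncomputable def T (φ : Mat3) (ρ : ℝ) (A B : Mat3) :
    Mat3 × Mat3 × ℂ × ℂ → Mat3 × Mat3 × ℂ × ℂ := fun ⟨X, Y, p, q⟩ =>
  (φ * X + X * φᴴ + ((ρ : ℂ)/3) • X + (2 : ℂ) • freud B Y + q • A,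
   (2 : ℂ) • freud A X - φᴴ * Y - Y * φ - ((ρ : ℂ)/3) • Y + p • B,
   (jord A Y).trace - (ρ : ℂ) * p,
   (jord B X).trace + (ρ : ℂ) * q)

theorem jord_comm (X Y : Mat3) : jord X Y = jord Y X := by
  rw [jord, jord, add_comm]

theorem jord_zero_left (Y : Mat3) : jord 0 Y = 0 := by
  simp [jord]

theorem jord_smul_right (c : ℂ) (X Y : Mat3) : jord X (c • Y) = c • jord X Y := by
  simp only [jord, Matrix.mul_smul, Matrix.smul_mul, ← smul_add, smul_comm c]

theorem jord_smul_left (c : ℂ) (X Y : Mat3) : jord (c • X) Y = c • jord X Y := by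
  rw [jord_comm, jord_smul_right, jord_comm]

theorem jord_neg_right (X Y : Mat3) : jord X (-Y) = -jord X Y := by
  simpa using jord_smul_right (-1) X Y

theorem trace_jord (X Y : Mat3) : (jord X Y).trace = (X * Y).trace := by
  rw [jord, trace_smul, trace_add, trace_mul_comm Y X]
  simp only [smul_eq_mul]
  ring

theorem trace_jord_jord_assoc (A B C : Mat3) :
    (jord (jord A B) C).trace = (jord A (jord B C)).trace := by
  rw [trace_jord, trace_jord, jord, jord, Matrix.smul_mul, Matrix.mul_smul, trace_smul,
    trace_smul, Matrix.add_mul, Matrix.mul_add, trace_add, trace_add, Matrix.mul_assoc A B C,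
    trace_mul_cycle B A C, trace_mul_comm (C * B) A]

theorem freud_zero_left (Y : Mat3) : freud 0 Y = 0 := by
  simp [freud, jord_zero_left]

theorem freud_smul_left (c : ℂ) (X Y : Mat3) : freud (c • X) Y = c • freud X Y := by
  simp only [freud, jord_comm _ Y, jord_smul_right, trace_smul, smul_eq_mul]
  module

theorem freud_smul_right (c : ℂ) (X Y : Mat3) : freud X (c • Y) = c • freud X Y := by
  simp only [freud, jord_smul_right, trace_smul, smul_eq_mul]
  module

theorem freud_jord_add_freud_jord_add_jord_freud {Q : Mat3} (hQ : Q.trace = 0) (A X : Mat3) :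
    freud (jord Q A) X + freud A (jord Q X) + jord Q (freud A X) = 0 := by
  have hQ22 : Q 2 2 = -Q 0 0 - Q 1 1 := by
    rw [trace_fin_three] at hQ
    linear_combination hQ
  ext i j
  simp only [freud, jord, trace_fin_three, Matrix.add_apply, Matrix.sub_apply, Matrix.smul_apply,
    mul_apply, Fin.sum_univ_three, one_apply, Matrix.zero_apply, smul_eq_mul]
  fin_cases i <;> fin_cases j <;> simp [hQ22] <;> ring

theorem T_boost_apply {Q : Mat3} (hQ : Qᴴ = Q) (X Y : Mat3) (p q : ℂ) :
    T Q 0 0 0 (X, Y, p, q) = ((2 : ℂ) • jord Q X, -((2 : ℂ) • jord Q Y), 0, 0) := by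
  simp only [T, hQ, freud_zero_left, jord_zero_left, trace_zero, Complex.ofReal_zero, zero_div,
    zero_smul, smul_zero, zero_mul, add_zero, sub_zero, Prod.mk.injEq]
  refine ⟨?_, ?_, trivial⟩ <;> simp only [jord] <;> module

theorem T_translation_apply (A X Y : Mat3) (p q : ℂ) :
    T 0 0 A 0 (X, Y, p, q) = (q • A, (2 : ℂ) • freud A X, (jord A Y).trace, 0) := by
  simp [T, freud_zero_left, jord_zero_left]

theorem stmt10_general (Q : Mat3) (hQherm : Qᴴ = Q) (hQtr : Q.trace = 0)
    (A : Mat3) :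
    ∀ (X Y : Mat3), Xᴴ = X → Yᴴ = Y → ∀ (p q : ℝ),
      T Q 0 0 0 (T 0 0 A 0 (X, Y, (p : ℂ), (q : ℂ)))
        - T 0 0 A 0 (T Q 0 0 0 (X, Y, (p : ℂ), (q : ℂ)))
        = T 0 0 ((2 : ℂ) • jord A Q) 0 (X, Y, (p : ℂ), (q : ℂ)) := by
  intro X Y _ _ p q
  simp only [T_translation_apply, T_boost_apply hQherm, Prod.mk_sub_mk, Prod.mk.injEq, zero_smul,
    sub_zero, zero_sub, neg_neg, jord_smul_left, jord_smul_right, jord_neg_right, freud_smul_left,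
    freud_smul_right, trace_smul, trace_neg, smul_eq_mul, jord_comm Q A, trace_jord_jord_assoc]
  have hderiv := freud_jord_add_freud_jord_add_jord_freud hQtr A X
  rw [jord_comm Q A] at hderiv
  refine ⟨?_, ?_, trivial⟩
  · exact smul_comm (2 : ℂ) (q : ℂ) (jord A Q)
  · linear_combination (norm := module) (-4 : ℂ) • hderiv

/-- for Q Hermitian traceless and A Hermitian, the commutator of the
boost T(Q,0,0,0) and the null translation T(0,0,A,0) on the space of quadruples
(X,Y,p,q) with X, Y Hermitian and p, q real satisfies
T(Q,0,0,0)∘T(0,0,A,0) − T(0,0,A,0)∘T(Q,0,0,0) = T(0,0,2(A∘Q),0). -/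
theorem stmt10 (Q : Mat3) (hQherm : Qᴴ = Q) (hQtr : Q.trace = 0)
    (A : Mat3) (hA : Aᴴ = A) :
    ∀ (X Y : Mat3), Xᴴ = X → Yᴴ = Y → ∀ (p q : ℝ),
      T Q 0 0 0 (T 0 0 A 0 (X, Y, (p : ℂ), (q : ℂ)))
        - T 0 0 A 0 (T Q 0 0 0 (X, Y, (p : ℂ), (q : ℂ)))
        = T 0 0 ((2 : ℂ) • jord A Q) 0 (X, Y, (p : ℂ), (q : ℂ)) :=
  stmt10_general Q hQherm hQtr A
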